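/- arXiv:math/9901109 — 3 statements merged into one kernel-verified Lean document; each statement's English description precedes it below -/
import Mathlib

section
/- Let X₁ = [[i cos θ, sin θ], [-sin θ, -i cos θ]], X₂ = [[i, 0], [0, -i]], and X₃ = [[i cos 2θ, sin 2θ], [-sin 2θ, -i cos 2θ]]. Then X₁ X₂ X₃⁻¹ X₂⁻¹ X₁⁻¹ = [[-i cos 4θ, -sin 4θ], [sin 4θ, i cos 4θ]]. -/
open Matrix Complex

theorem stmt_1 (θ : ℝ)
    (X₁ X₂ X₃ : Matrix (Fin 2) (Fin 2) ℂ)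
    (hX₁ : X₁ = !![Complex.I * Real.cos θ, (Real.sin θ : ℂ); -(Real.sin θ : ℂ), -(Complex.I * Real.cos θ)])
    (hX₂ : X₂ = !![Complex.I, 0; 0, -Complex.I])
    (hX₃ : X₃ = !![Complex.I * Real.cos (2*θ), (Real.sin (2*θ) : ℂ); -(Real.sin (2*θ) : ℂ), -(Complex.I * Real.cos (2*θ))]) :
    X₁ * X₂ * X₃⁻¹ * X₂⁻¹ * X₁⁻¹
      = !![-(Complex.I * Real.cos (4*θ)), -(Real.sin (4*θ) : ℂ);
           (Real.sin (4*θ) : ℂ), Complex.I * Real.cos (4*θ)] := by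
  have h1 : X₁⁻¹ = -X₁ := by
    apply inv_eq_right_inv
    subst hX₁
    ext i j
    fin_cases i <;> fin_cases j <;>
      simp [Matrix.mul_apply, Fin.sum_univ_succ] <;> ring_nf <;>
      simp [Complex.I_sq, Complex.ext_iff] <;> nlinarith [Real.sin_sq_add_cos_sq θ]
  have h3 : X₃⁻¹ = -X₃ := by
    apply inv_eq_right_inv
    subst hX₃
    ext i j
    fin_cases i <;> fin_cases j <;>
      simp [Matrix.mul_apply, Fin.sum_univ_succ] <;> ring_nf <;>
      simp [Complex.I_sq, Complex.ext_iff] <;> nlinarith [Real.sin_sq_add_cos_sq (2*θ)]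
  have h2 : X₂⁻¹ = -X₂ := by
    apply inv_eq_right_inv
    subst hX₂
    ext i j
    fin_cases i <;> fin_cases j <;>
      simp [Matrix.mul_apply, Fin.sum_univ_succ, Complex.I_mul_I]
  rw [h1, h2, h3]
  subst hX₁ hX₂ hX₃
  have s2r : Real.sin (2*θ) = 2 * Real.sin θ * Real.cos θ := Real.sin_two_mul θ
  have c2r : Real.cos (2*θ) = Real.cos θ^2 - Real.sin θ^2 := Real.cos_two_mul' θ
  have s4r : Real.sin (4*θ) = 2 * Real.sin (2*θ) * Real.cos (2*θ) := by
    rw [show (4*θ) = 2*(2*θ) by ring, Real.sin_two_mul]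
  have c4r : Real.cos (4*θ) = Real.cos (2*θ)^2 - Real.sin (2*θ)^2 := by
    rw [show (4*θ) = 2*(2*θ) by ring, Real.cos_two_mul']
  have s2c : ((Real.sin (2*θ) : ℂ)) = 2 * Real.sin θ * Real.cos θ := by push_cast [s2r]; ring
  have c2c : ((Real.cos (2*θ) : ℂ)) = (Real.cos θ:ℂ)^2 - (Real.sin θ:ℂ)^2 := by push_cast [c2r]; ring
  have s4c : ((Real.sin (4*θ) : ℂ)) = 2 * ((2:ℂ) * Real.sin θ * Real.cos θ) * ((Real.cos θ:ℂ)^2 - (Real.sin θ:ℂ)^2) := by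
    push_cast [s4r, s2r, c2r]; ring
  have c4c : ((Real.cos (4*θ) : ℂ)) = ((Real.cos θ:ℂ)^2 - (Real.sin θ:ℂ)^2)^2 - ((2:ℂ) * Real.sin θ * Real.cos θ)^2 := by
    push_cast [c4r, s2r, c2r]; ring
  have hI3 : Complex.I^3 = -Complex.I := by
    rw [pow_succ, Complex.I_sq]; ring
  have hI5 : Complex.I^5 = Complex.I := by
    rw [show (5:ℕ) = 2 + 3 by rfl, pow_add, Complex.I_sq, hI3]; ring
  have hI4 : Complex.I^4 = 1 := by
    rw [show (4:ℕ) = 2 + 2 by rfl, pow_add, Complex.I_sq]; ring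
  ext i j
  fin_cases i <;> fin_cases j <;>
    · simp [Matrix.mul_apply, Fin.sum_univ_succ, s2c, c2c, s4c, c4c,
        -Complex.ofReal_sin, -Complex.ofReal_cos]
      ring_nf
      simp only [hI3, hI4, hI5, Complex.I_sq]
      ring
end

section
/- Let X₁ = [[i cos θ, sin θ], [-sin θ, -i cos θ]], X₂ = [[i, 0], [0, -i]], and X₃ = [[i cos 2θ, sin 2θ], [-sin 2θ, -i cos 2θ]]. Then X₁ X₂⁻¹ X₁ X₂ X₁⁻¹ = [[i cos 3θ, sin 3θ], [-sin 3θ, -i cos 3θ]]. -/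
open Matrix Complex

theorem stmt_2 (θ : ℝ)
    (X₁ X₂ X₃ : Matrix (Fin 2) (Fin 2) ℂ)
    (hX₁ : X₁ = !![Complex.I * Real.cos θ, (Real.sin θ : ℂ); -(Real.sin θ : ℂ), -(Complex.I * Real.cos θ)])
    (hX₂ : X₂ = !![Complex.I, 0; 0, -Complex.I])
    (hX₃ : X₃ = !![Complex.I * Real.cos (2*θ), (Real.sin (2*θ) : ℂ); -(Real.sin (2*θ) : ℂ), -(Complex.I * Real.cos (2*θ))]) :
    X₁ * X₂⁻¹ * X₁ * X₂ * X₁⁻¹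
      = !![Complex.I * Real.cos (3*θ), (Real.sin (3*θ) : ℂ);
           -(Real.sin (3*θ) : ℂ), -(Complex.I * Real.cos (3*θ))] := by
  have hsc : Complex.cos (θ:ℂ)^2 + Complex.sin (θ:ℂ)^2 = 1 := Complex.cos_sq_add_sin_sq _
  have hI : Complex.I ^ 2 = -1 := Complex.I_sq
  have h1 : X₁⁻¹ = -X₁ := by
    apply inv_eq_right_inv
    subst hX₁
    ext i j
    fin_cases i <;> fin_cases j <;>
      simp [Matrix.mul_apply, Fin.sum_univ_succ, Complex.ofReal_cos, Complex.ofReal_sin] <;>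
      first | (linear_combination (-(Complex.cos (θ:ℂ))^2) * hI + hsc) | ring
  have h2 : X₂⁻¹ = -X₂ := by
    apply inv_eq_right_inv
    subst hX₂
    ext i j
    fin_cases i <;> fin_cases j <;>
      simp [Matrix.mul_apply, Fin.sum_univ_succ, Complex.I_mul_I]
  rw [h1, h2]
  subst hX₁ hX₂
  rw [Real.cos_three_mul, Real.sin_three_mul]
  push_cast
  set c : ℂ := Complex.cos (θ:ℂ)
  set s : ℂ := Complex.sin (θ:ℂ)
  ext i j
  fin_cases i <;> fin_cases j <;>
    simp [Matrix.mul_apply, Fin.sum_univ_succ, Complex.ofReal_cos, Complex.ofReal_sin]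
  · linear_combination (Complex.I^3*c^3 - Complex.I*c^3 + 3*Complex.I*c*s^2) * hI
      + (-3*Complex.I*c) * hsc
  · linear_combination (3*Complex.I^2*c^2*s - 3*c^2*s + s^3) * hI + (3*s) * hsc
  · linear_combination (-(3*Complex.I^2*c^2*s) + 3*c^2*s - s^3) * hI + (-3*s) * hsc
  · linear_combination (-(Complex.I^3*c^3) + Complex.I*c^3 - 3*Complex.I*c*s^2) * hI
      + (3*Complex.I*c) * hsc
end

section
/- Let X₁ = [[i cos θ, sin θ], [-sin θ, -i cos θ]] and X₂ = diag(i, -i) with θ ∈ ℝ, and set X₃ = X₁X₂X₁⁻¹. If X₁X₂⁻¹X₁X₂X₁⁻¹ = X₂, then cos 3θ = 1. -/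
open Matrix

theorem stmt_16 (θ : ℝ)
    (X₁ X₂ X₃ : Matrix (Fin 2) (Fin 2) ℂ)
    (hX₁ : X₁ = !![Complex.I * Real.cos θ, (Real.sin θ : ℂ); -(Real.sin θ : ℂ), -(Complex.I * Real.cos θ)])
    (hX₂ : X₂ = !![Complex.I, 0; 0, -Complex.I])
    (hX₃ : X₃ = X₁ * X₂ * X₁⁻¹)
    (h : X₁ * X₂⁻¹ * X₁ * X₂ * X₁⁻¹ = X₂) :
    Real.cos (3*θ) = 1 := by
  have hpy : (Real.sin θ : ℂ)^2 + (Real.cos θ : ℂ)^2 = 1 := by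
    have := Real.sin_sq_add_cos_sq θ
    push_cast
    exact_mod_cast congrArg (Complex.ofReal) this
  have h1inv : X₁⁻¹ = -X₁ := by
    apply inv_eq_left_inv
    rw [hX₁]
    ext i j
    fin_cases i <;> fin_cases j <;>
      simp [Matrix.mul_apply, Fin.sum_univ_two, Complex.ext_iff, Complex.cos_ofReal_re, Complex.sin_ofReal_re] <;>
      nlinarith [Real.sin_sq_add_cos_sq θ]
  have h2inv : X₂⁻¹ = -X₂ := by
    apply inv_eq_left_inv
    rw [hX₂]
    ext i j
    fin_cases i <;> fin_cases j <;>
      simp [Matrix.mul_apply, Fin.sum_univ_two, Complex.ext_iff, Complex.cos_ofReal_re, Complex.sin_ofReal_re]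
  rw [h1inv, h2inv, hX₁, hX₂] at h
  have h00 := congrFun (congrFun h 0) 0
  simp [Matrix.mul_apply, Fin.sum_univ_two, Complex.ext_iff, Complex.cos_ofReal_re, Complex.sin_ofReal_re] at h00
  rw [Real.cos_three_mul]
  linear_combination h00 + 3 * Real.cos θ * Real.sin_sq_add_cos_sq θ
end
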